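/- Let Γ ∈ ℬ⁰[[t]] and define ℏ∇_α(w) := ℏ ∂_α w + (∂_α Γ)·w on ℬ[[t]][[ℏ]], and D := δ_{S+Γ} + ℏΔ where δ_{S+Γ} = Σᵢ (∂(S+Γ)/∂xᵢ) ∂/∂ηᵢ. Then ℏ∇_α commutes with D on ℬ[[t]][[ℏ]]: (ℏ∇_α) ∘ D = D ∘ (ℏ∇_α). -/

import Mathlib

open Finset

variable {J : Type} [DecidableEq J]

/-- `ℂ[x]`-coefficients: `ℂ[x₁,…,xₙ]`. -/
abbrev Px (n : ℕ) := MvPolynomial (Fin n) ℂ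
/-- `ℂ[x][[t]]`. -/
abbrev Rt (n : ℕ) (J : Type) := MvPowerSeries J (Px n)
/-- `ℂ[x][[t]][[ℏ]]`. -/
abbrev RtH (n : ℕ) (J : Type) := PowerSeries (Rt n J)
/-- `𝒜[[t]][[ℏ]]` where `𝒜 = ℂ[x][η]`; components indexed by η-monomials. -/
abbrev EH (n : ℕ) (J : Type) := Finset (Fin n) → RtH n J

/-- `∂/∂xᵢ` on `ℂ[x][[t]]`, coefficientwise in `t`. -/
noncomputable def pdx {n : ℕ} (i : Fin n) (F : Rt n J) : Rt n J :=
  fun e => MvPolynomial.pderiv i (F e)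

/-- `∂/∂xᵢ` on `ℂ[x][[t]][[ℏ]]`. -/
noncomputable def pdxH {n : ℕ} (i : Fin n) (F : RtH n J) : RtH n J :=
  PowerSeries.mk fun k => pdx i (PowerSeries.coeff k F)

/-- `∂/∂t^α` on `ℂ[x][[t]]`. -/
noncomputable def tderiv {n : ℕ} (α : J) (f : Rt n J) : Rt n J :=
  fun e => (e α + 1) • f (e + Finsupp.single α 1)

/-- `∂/∂t^α` on `ℂ[x][[t]][[ℏ]]`. -/
noncomputable def tderivH {n : ℕ} (α : J) (F : RtH n J) : RtH n J :=
  PowerSeries.mk fun k => tderiv α (PowerSeries.coeff k F)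

/-- The contraction `Σᵢ fᵢ ∂/∂ηᵢ` on `𝒜[[t]][[ℏ]]`. -/
noncomputable def contrH {n : ℕ} (f : Fin n → RtH n J) (a : EH n J) : EH n J :=
  fun T => ∑ i : Fin n,
    if i ∈ T then 0
    else ((-1 : ℤ) ^ (T.filter (· < i)).card) • (f i * a (insert i T))

/-- The BV operator `Δ = Σᵢ (∂/∂xᵢ)(∂/∂ηᵢ)` on `𝒜[[t]][[ℏ]]`. -/
noncomputable def bvDeltaH {n : ℕ} (a : EH n J) : EH n J :=
  fun T => ∑ i : Fin n,
    if i ∈ T then 0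
    else ((-1 : ℤ) ^ (T.filter (· < i)).card) • pdxH i (a (insert i T))

/-- `δ_{S+Γ} = Σᵢ (∂(S+Γ)/∂xᵢ) ∂/∂ηᵢ` on `𝒜[[t]][[ℏ]]`, for `Γ ∈ ℬ⁰[[t]]`. -/
noncomputable def deltaSG {n : ℕ} (S : Px n) (Γ : Rt n J) : EH n J → EH n J :=
  contrH fun i => PowerSeries.C (pdx i (MvPowerSeries.C (σ := J) (R := Px n) S + Γ))

/-- `D = δ_{S+Γ} + ℏΔ`. -/
noncomputable def Dop {n : ℕ} (S : Px n) (Γ : Rt n J) (a : EH n J) : EH n J :=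
  fun T => deltaSG S Γ a T + PowerSeries.X * bvDeltaH a T

/-- `ℏ∇_α(w) = ℏ ∂_α w + (∂_αΓ)·w`, componentwise on `𝒜[[t]][[ℏ]]`. -/
noncomputable def hnabla {n : ℕ} (Γ : Rt n J) (α : J) (a : EH n J) : EH n J :=
  fun T => PowerSeries.X * tderivH α (a T) + PowerSeries.C (tderiv α Γ) * a T


/-! Componentwise in the η-monomials, `ℏ∇_α` is the operator `ℏ ∂_α + ∂_αΓ` on `ℂ[x][[t]][[ℏ]]`,
and the `i`-th summand of `D` is `ℏ ∂_i + ∂_i(S + Γ)` followed by the signed contraction `∂/∂ηᵢ`.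
For derivations `d, p` one has `[ℏ d + g, ℏ p + f] = ℏ (d f - p g) + ℏ² [d, p]`; here `∂_α` and
`∂_i` commute, and `∂_α ∂_i (S + Γ) = ∂_i ∂_α Γ` because `S` does not depend on `t`. -/

namespace PowerSeries

variable {R : Type*}

noncomputable def mapCoeff [Semiring R] (d : R →+ R) : R⟦X⟧ →+ R⟦X⟧ where
  toFun F := mk fun k => d (coeff k F)
  map_zero' := by ext; simp
  map_add' F G := by ext; simp

@[simp]
theorem coeff_mapCoeff [Semiring R] (d : R →+ R) (k : ℕ) (F : R⟦X⟧) :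
    coeff k (mapCoeff d F) = d (coeff k F) :=
  coeff_mk k fun k => d (coeff k F)

theorem mapCoeff_X_mul [Semiring R] (d : R →+ R) (F : R⟦X⟧) :
    mapCoeff d (X * F) = X * mapCoeff d F := by
  ext (_ | k) <;> simp [coeff_succ_X_mul]

theorem mapCoeff_C_mul [Semiring R] {d : R →+ R} (hd : ∀ x y, d (x * y) = d x * y + x * d y)
    (g : R) (F : R⟦X⟧) :
    mapCoeff d (C g * F) = C (d g) * F + C g * mapCoeff d F := by
  ext k; simp [coeff_C_mul, hd]

theorem mapCoeff_comm [Semiring R] {d p : R →+ R} (hdp : ∀ x, d (p x) = p (d x)) (F : R⟦X⟧) :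
    mapCoeff d (mapCoeff p F) = mapCoeff p (mapCoeff d F) := by
  ext k; simp [hdp]

/-- `ℏ d + g` on `R⟦ℏ⟧`, with `X` for `ℏ` and `d` acting coefficientwise. -/
noncomputable def twistedDeriv [Semiring R] (d : R →+ R) (g : R) : R⟦X⟧ →+ R⟦X⟧ :=
  (AddMonoidHom.mulLeft X).comp (mapCoeff d) + AddMonoidHom.mulLeft (C g)

theorem twistedDeriv_apply [Semiring R] (d : R →+ R) (g : R) (F : R⟦X⟧) :
    twistedDeriv d g F = X * mapCoeff d F + C g * F :=
  rfl

theorem twistedDeriv_comm [CommSemiring R] {d p : R →+ R}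
    (hd : ∀ x y, d (x * y) = d x * y + x * d y) (hp : ∀ x y, p (x * y) = p x * y + x * p y)
    (hdp : ∀ x, d (p x) = p (d x)) {f g : R} (hfg : d f = p g) (F : R⟦X⟧) :
    twistedDeriv d g (twistedDeriv p f F) = twistedDeriv p f (twistedDeriv d g F) := by
  simp only [twistedDeriv_apply, map_add, mapCoeff_X_mul, mapCoeff_C_mul hd, mapCoeff_C_mul hp,
    mapCoeff_comm hdp, hfg]
  ring

end PowerSeries

open PowerSeries

section Derivatives

variable {σ : Type} {n : ℕ}

theorem tderiv_eq_pderiv (α : σ) (f : Rt n σ) :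
    tderiv α f = MvPowerSeries.pderiv (Px n) α f := by
  refine MvPowerSeries.ext fun e => ?_
  rw [MvPowerSeries.coeff_pderiv]
  show (e α + 1) • f (e + Finsupp.single α 1) = _
  rw [nsmul_eq_mul, mul_comm]
  push_cast
  rfl

theorem tderiv_mul (α : σ) (f g : Rt n σ) :
    tderiv α (f * g) = tderiv α f * g + f * tderiv α g := by
  simp only [tderiv_eq_pderiv, Derivation.leibniz, smul_eq_mul]
  ring

theorem pdx_mul (i : Fin n) (f g : Rt n σ) :
    pdx i (f * g) = pdx i f * g + f * pdx i g := by
  classical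
  refine MvPowerSeries.ext fun e => ?_
  show MvPolynomial.pderiv i (MvPowerSeries.coeff e (f * g)) = _
  rw [map_add, MvPowerSeries.coeff_mul, MvPowerSeries.coeff_mul, MvPowerSeries.coeff_mul, map_sum,
    ← sum_add_distrib]
  exact sum_congr rfl fun x _ => MvPolynomial.pderiv_mul

theorem pdx_tderiv (i : Fin n) (α : σ) (f : Rt n σ) :
    pdx i (tderiv α f) = tderiv α (pdx i f) :=
  funext fun _ => map_nsmul (MvPolynomial.pderiv i) _ _

theorem tderiv_pdx_C_add (i : Fin n) (α : σ) (S : Px n) (Γ : Rt n σ) :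
    tderiv α (pdx i (MvPowerSeries.C S + Γ)) = pdx i (tderiv α Γ) := by
  classical
  rw [← pdx_tderiv, tderiv_eq_pderiv, tderiv_eq_pderiv, map_add, MvPowerSeries.pderiv_C, zero_add]

noncomputable def tderivHom (α : σ) : Rt n σ →+ Rt n σ where
  toFun := tderiv α
  map_zero' := by rw [tderiv_eq_pderiv, map_zero]
  map_add' f g := by simp only [tderiv_eq_pderiv, map_add]

noncomputable def pdxHom (i : Fin n) : Rt n σ →+ Rt n σ where
  toFun := pdx i
  map_zero' := funext fun _ => map_zero _
  map_add' _ _ := funext fun _ => map_add _ _ _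

theorem hnabla_apply (Γ : Rt n σ) (α : σ) (a : EH n σ) (T : Finset (Fin n)) :
    hnabla Γ α a T = twistedDeriv (tderivHom α) (tderiv α Γ) (a T) :=
  rfl

theorem Dop_apply (S : Px n) (Γ : Rt n σ) (a : EH n σ) (T : Finset (Fin n)) :
    Dop S Γ a T = ∑ i : Fin n, if i ∈ T then 0 else ((-1 : ℤ) ^ (T.filter (· < i)).card) •
      twistedDeriv (pdxHom i) (pdx i (MvPowerSeries.C S + Γ)) (a (insert i T)) := by
  simp only [Dop, deltaSG, contrH, bvDeltaH, mul_sum, ← sum_add_distrib]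
  refine sum_congr rfl fun i _ => ?_
  split_ifs
  · simp
  · rw [twistedDeriv_apply, mul_smul_comm, ← smul_add, add_comm]
    rfl

end Derivatives

/-- The twisted connection `ℏ∇_α` commutes with `D = δ_{S+Γ} + ℏΔ` on `ℬ[[t]][[ℏ]]`. -/
theorem hnabla_commutes_with_D (n : ℕ) (S : Px n) (Γ : Rt n J) (α : J) (a : EH n J) :
    hnabla Γ α (Dop S Γ a) = Dop S Γ (hnabla Γ α a) := by
  have hcomm : ∀ (i : Fin n) F, twistedDeriv (tderivHom α) (tderiv α Γ)
      (twistedDeriv (pdxHom i) (pdx i (MvPowerSeries.C S + Γ)) F) =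
      twistedDeriv (pdxHom i) (pdx i (MvPowerSeries.C S + Γ))
      (twistedDeriv (tderivHom α) (tderiv α Γ) F) := fun i =>
    twistedDeriv_comm (tderiv_mul α) (pdx_mul i) (fun f => (pdx_tderiv i α f).symm)
      (tderiv_pdx_C_add i α S Γ)
  funext T
  simp only [hnabla_apply, Dop_apply, map_sum, apply_ite, map_zero, map_zsmul, hcomm]
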